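/- If (V,d) is a differential graded k-module with H¹(V)=0, then (V,d) is rigid: every deformation V_t = (V[[t]], d_t) is equivalent to the trivial deformation (V[[t]], d). -/

import Mathlib

open Finset

/-- The k[[t]]-linear extension to V[[t]] ≅ (ℕ → V) of a formal power series
`∑ tⁱ D i` of k-linear endomorphisms of `V` (Cauchy-product action on coefficients). -/
noncomputable def ext {k V : Type*} [Field k] [AddCommGroup V] [Module k V]
    (D : ℕ → Module.End k V) : Module.End k (ℕ → V) where
  toFun v n := ∑ i ∈ Finset.range (n + 1), D i (v (n - i))
  map_add' u v := by
    funext n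
    simp [Finset.sum_add_distrib]
  map_smul' c v := by
    funext n
    simp [Finset.smul_sum]

/-- The trivial deformation `d_t = d` of a differential `d`. -/
noncomputable def trivDef {k V : Type*} [Field k] [AddCommGroup V] [Module k V]
    (d : Module.End k V) : ℕ → Module.End k V :=
  fun n => if n = 0 then d else 0

/-- Equivalence of deformations: a k[[t]]-linear automorphism `φ_t` of `V[[t]]` with
`φ_t ≡ Id (mod t)` and `d_t φ_t = φ_t d_t'`. -/
def IsEquivDef {k V : Type*} [Field k] [AddCommGroup V] [Module k V]
    (D D' : ℕ → Module.End k V) : Prop :=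
  ∃ Φ : ℕ → Module.End k V, Φ 0 = 1 ∧ Function.Bijective (ext Φ) ∧
    ext D * ext Φ = ext Φ * ext D'

section Aux

variable {k V : Type*} [Field k] [AddCommGroup V] [Module k V]

lemma ext_apply (D : ℕ → Module.End k V) (v : ℕ → V) (n : ℕ) :
    ext D v n = ∑ i ∈ Finset.range (n + 1), D i (v (n - i)) := rfl

lemma sum_shuffle {M : Type*} [AddCommMonoid M] (F : ℕ → ℕ → ℕ → M) (n : ℕ) :
    ∑ i ∈ range (n + 1), ∑ j ∈ range (n - i + 1), F i j (n - i - j)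
      = ∑ l ∈ range (n + 1), ∑ i ∈ range (l + 1), F i (l - i) (n - l) := by
  rw [Finset.sum_sigma', Finset.sum_sigma']
  refine Finset.sum_nbij' (fun p => ⟨p.1 + p.2, p.1⟩) (fun q => ⟨q.2, q.1 - q.2⟩)
    ?_ ?_ ?_ ?_ ?_
  · rintro ⟨i, j⟩ h
    simp only [Finset.mem_sigma, Finset.mem_range] at h ⊢
    omega
  · rintro ⟨l, i⟩ h
    simp only [Finset.mem_sigma, Finset.mem_range] at h ⊢
    constructor <;> omega
  · rintro ⟨i, j⟩ h
    simp
  · rintro ⟨l, i⟩ h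
    simp only [Finset.mem_sigma, Finset.mem_range] at h
    simp only [Sigma.mk.inj_iff]
    exact ⟨by omega, HEq.rfl⟩
  · rintro ⟨i, j⟩ h
    simp only [Finset.mem_sigma, Finset.mem_range] at h
    have h1 : i + j - i = j := by omega
    have h2 : n - i - j = n - (i + j) := by omega
    rw [h1, h2]

lemma ext_mul (A B : ℕ → Module.End k V) :
    ext A * ext B
      = ext (fun n => PowerSeries.coeff n
          (PowerSeries.mk A * PowerSeries.mk B)) := by
  apply LinearMap.ext
  intro v
  funext n
  have lhs : (ext A * ext B) v n
      = ∑ i ∈ range (n + 1), ∑ j ∈ range (n - i + 1), A i (B j (v (n - i - j))) := by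
    show ext A (ext B v) n = _
    rw [ext_apply]
    refine Finset.sum_congr rfl (fun i _ => ?_)
    rw [ext_apply, map_sum]
  rw [lhs, ext_apply]
  rw [sum_shuffle (fun i j p => A i (B j (v p))) n]
  refine Finset.sum_congr rfl (fun l _ => ?_)
  rw [PowerSeries.coeff_mul, Finset.Nat.sum_antidiagonal_eq_sum_range_succ_mk]
  simp only [PowerSeries.coeff_mk, LinearMap.sum_apply, Module.End.mul_apply]

lemma ext_coeff_eq_zero (A : ℕ → Module.End k V) (h : ext A = 0) : ∀ n, A n = 0 := by
  intro n
  apply LinearMap.ext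
  intro x
  have := congrFun (congrArg (fun f : Module.End k (ℕ → V) => f (fun m => if m = 0 then x else 0)) h) n
  simp only [ext_apply, LinearMap.zero_apply, Pi.zero_apply] at this
  rw [Finset.sum_eq_single n] at this
  · simpa using this
  · intro i hi hne
    have : n - i ≠ 0 := by
      simp only [Finset.mem_range] at hi; omega
    simp [this]
  · intro h'; simp at h'

lemma ext_delta : ext (fun n => if n = 0 then (1 : Module.End k V) else 0) = 1 := by
  apply LinearMap.ext
  intro v
  funext n
  rw [ext_apply, Finset.sum_eq_single 0]
  · simp
  · intro i hi hne; simp [hne]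
  · intro h'; simp at h'

/-- Recursively constructed equivalence `Φ`. -/
noncomputable def phiSeq (G : Module.End k V → Module.End k V)
    (D : ℕ → Module.End k V) : ℕ → Module.End k V
  | 0 => 1
  | n + 1 => G (-∑ j ∈ (Finset.range (n + 1)).attach,
      D (n + 1 - j.1) * phiSeq G D j.1)
  decreasing_by exact Finset.mem_range.mp j.2

/-- Recursive right inverse of `Φ`. -/
noncomputable def invR (Φ : ℕ → Module.End k V) : ℕ → Module.End k V
  | 0 => 1
  | n + 1 => -∑ j ∈ (Finset.range (n + 1)).attach, Φ (n + 1 - j.1) * invR Φ j.1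
  decreasing_by exact Finset.mem_range.mp j.2

/-- Recursive left inverse of `Φ`. -/
noncomputable def invL (Φ : ℕ → Module.End k V) : ℕ → Module.End k V
  | 0 => 1
  | n + 1 => -∑ j ∈ (Finset.range (n + 1)).attach, invL Φ j.1 * Φ (n + 1 - j.1)
  decreasing_by exact Finset.mem_range.mp j.2

lemma mk_invR (Φ : ℕ → Module.End k V) (hΦ0 : Φ 0 = 1) :
    PowerSeries.mk Φ * PowerSeries.mk (invR Φ) = 1 := by
  refine PowerSeries.ext fun n => ?_
  rw [PowerSeries.coeff_mul, Finset.Nat.sum_antidiagonal_eq_sum_range_succ_mk,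
    PowerSeries.coeff_one]
  simp only [PowerSeries.coeff_mk, Nat.succ_eq_add_one]
  cases n with
  | zero => simp [hΦ0, invR]
  | succ n =>
    rw [Finset.sum_range_succ' (fun i => Φ i * invR Φ (n + 1 - i)) (n + 1)]
    have h1 : invR Φ (n + 1)
        = -∑ j ∈ range (n + 1), Φ (n + 1 - j) * invR Φ j := by
      rw [invR, Finset.sum_attach (range (n+1)) (fun j => Φ (n + 1 - j) * invR Φ j)]
    have h2 : ∑ i ∈ range (n + 1), Φ (i + 1) * invR Φ (n + 1 - (i + 1))
        = ∑ j ∈ range (n + 1), Φ (n + 1 - j) * invR Φ j := by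
      rw [← Finset.sum_range_reflect (fun j => Φ (n + 1 - j) * invR Φ j) (n + 1)]
      refine Finset.sum_congr rfl (fun i hi => ?_)
      simp only [Finset.mem_range] at hi
      congr 2 <;> omega
    rw [h2, hΦ0, Nat.sub_zero, one_mul, h1]
    simp

lemma mk_invL (Φ : ℕ → Module.End k V) (hΦ0 : Φ 0 = 1) :
    PowerSeries.mk (invL Φ) * PowerSeries.mk Φ = 1 := by
  refine PowerSeries.ext fun n => ?_
  rw [PowerSeries.coeff_mul, Finset.Nat.sum_antidiagonal_eq_sum_range_succ_mk,
    PowerSeries.coeff_one]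
  simp only [PowerSeries.coeff_mk, Nat.succ_eq_add_one]
  cases n with
  | zero => simp [hΦ0, invL]
  | succ n =>
    rw [Finset.sum_range_succ (fun i => invL Φ i * Φ (n + 1 - i)) (n + 1)]
    have h1 : invL Φ (n + 1)
        = -∑ j ∈ range (n + 1), invL Φ j * Φ (n + 1 - j) := by
      rw [invL, Finset.sum_attach (range (n+1)) (fun j => invL Φ j * Φ (n + 1 - j))]
    rw [h1, Nat.sub_self, hΦ0]
    simp

lemma mk_trivDef (d : Module.End k V) :
    PowerSeries.mk (trivDef d) = PowerSeries.C d := by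
  refine PowerSeries.ext fun n => ?_
  rw [PowerSeries.coeff_mk, PowerSeries.coeff_C]
  rfl

end Aux

/-- If `H¹(V) = 0` (every 1-cocycle `f`, i.e. `df + fd = 0`, equals `δ(g) = dg - gd`
for some 0-cochain `g`), then `(V, d)` is rigid: every deformation
`d_t = d + t d_1 + ⋯` of `d` is equivalent to the trivial deformation. -/
theorem rigid_of_H1_eq_zero {k V : Type*} [Field k]
    [AddCommGroup V] [Module k V]
    (d : Module.End k V) (hd : d * d = 0)
    (H1 : ∀ f : Module.End k V, d * f + f * d = 0 →
      ∃ g : Module.End k V, d * g - g * d = f)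
    (D : ℕ → Module.End k V) (hD0 : D 0 = d) (hdef : ext D * ext D = 0) :
    IsEquivDef D (trivDef d) := by
  classical
  -- choice function for H1
  set G : Module.End k V → Module.End k V :=
    fun f => if h : d * f + f * d = 0 then Classical.choose (H1 f h) else 0 with hGdef
  have hG : ∀ f : Module.End k V, d * f + f * d = 0 → d * G f - G f * d = f := by
    intro f h
    simp only [hGdef, dif_pos h]
    exact Classical.choose_spec (H1 f h)
  set Φ : ℕ → Module.End k V := phiSeq G D with hΦdef
  have hΦ0 : Φ 0 = 1 := by rw [hΦdef]; rw [phiSeq]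
  -- power series
  set ED : PowerSeries (Module.End k V) := PowerSeries.mk D with hED
  set EΦ : PowerSeries (Module.End k V) := PowerSeries.mk Φ with hEΦ
  set T : PowerSeries (Module.End k V) := PowerSeries.C d with hT
  have hE2 : ED * ED = 0 := by
    refine PowerSeries.ext fun n => ?_
    have h0 : ext D * ext D
        = ext (fun n => PowerSeries.coeff n (ED * ED)) := ext_mul D D
    rw [hdef] at h0
    have := ext_coeff_eq_zero _ h0.symm n
    simpa using this
  have hT2 : T * T = 0 := by
    rw [hT, ← map_mul, hd, map_zero]
  set Y : PowerSeries (Module.End k V) := ED * EΦ - EΦ * T with hY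
  have hEYT : ED * Y + Y * T = 0 := by
    have : ED * Y + Y * T = ED * ED * EΦ - EΦ * (T * T) := by rw [hY]; noncomm_ring
    rw [this, hE2, hT2]
    simp
  -- main claim by strong induction
  have key : ∀ n, PowerSeries.coeff n Y = 0 := by
    intro n
    induction n using Nat.strong_induction_on with
    | _ n IH =>
      cases n with
      | zero =>
        rw [hY]
        simp only [map_sub]
        rw [hT, PowerSeries.coeff_mul_C, hED, hEΦ]
        have h0 : PowerSeries.coeff 0
            (PowerSeries.mk D * PowerSeries.mk Φ) = D 0 * Φ 0 := by
          rw [PowerSeries.coeff_mul, Finset.Nat.sum_antidiagonal_eq_sum_range_succ_mk]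
          simp [PowerSeries.coeff_mk]
        rw [h0, hD0, hΦ0, PowerSeries.coeff_mk, hΦ0]
        simp
      | succ n =>
        -- y is a cocycle
        set y : Module.End k V := PowerSeries.coeff (n + 1) Y with hy
        have hycoc : d * y + y * d = 0 := by
          have h1 : PowerSeries.coeff (n + 1) (ED * Y) = d * y := by
            rw [PowerSeries.coeff_mul, Finset.Nat.sum_antidiagonal_eq_sum_range_succ_mk]
            rw [Finset.sum_eq_single 0]
            · rw [hED]; simp only [PowerSeries.coeff_mk, Nat.sub_zero, hD0, hy]
            · intro i hi hne
              have hle : i ≤ n + 1 := by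
                simp only [Finset.mem_range, Nat.succ_eq_add_one] at hi; omega
              rw [IH (n + 1 - i) (by omega), mul_zero]
            · intro h'; simp at h'
          have h2 : PowerSeries.coeff (n + 1) (Y * T) = y * d := by
            rw [hT, PowerSeries.coeff_mul_C, hy]
          have h3 := congrArg (PowerSeries.coeff (n + 1)) hEYT
          rw [map_add, h1, h2, map_zero] at h3
          exact h3
        -- express y via Φ (n+1)
        set w : Module.End k V := -∑ j ∈ range (n + 1), D (n + 1 - j) * Φ j with hw
        have hΦsucc : Φ (n + 1) = G w := by
          rw [hΦdef]
          show phiSeq G D (n + 1) = G w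
          rw [phiSeq, hw]
          congr 1
          rw [Finset.sum_attach (range (n+1)) (fun j => D (n + 1 - j) * phiSeq G D j)]
        have hyval : y = (d * Φ (n + 1) - Φ (n + 1) * d) - w := by
          rw [hy, hY, map_sub, hT, PowerSeries.coeff_mul_C]
          rw [hED, hEΦ, PowerSeries.coeff_mk]
          have hc : PowerSeries.coeff (n + 1)
              (PowerSeries.mk D * PowerSeries.mk Φ)
              = d * Φ (n + 1) + ∑ j ∈ range (n + 1), D (n + 1 - j) * Φ j := by
            rw [PowerSeries.coeff_mul, Finset.Nat.sum_antidiagonal_eq_sum_range_succ_mk]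
            simp only [PowerSeries.coeff_mk, Nat.succ_eq_add_one]
            rw [Finset.sum_range_succ' (fun i => D i * Φ (n + 1 - i)) (n + 1)]
            have h2 : ∑ i ∈ range (n + 1), D (i + 1) * Φ (n + 1 - (i + 1))
                = ∑ j ∈ range (n + 1), D (n + 1 - j) * Φ j := by
              rw [← Finset.sum_range_reflect (fun j => D (n + 1 - j) * Φ j) (n + 1)]
              refine Finset.sum_congr rfl (fun i hi => ?_)
              simp only [Finset.mem_range] at hi
              congr 2 <;> omega
            rw [h2, Nat.sub_zero, hD0]
            exact add_comm _ _
          rw [hc, hw]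
          abel
        have hwcoc : d * w + w * d = 0 := by
          have hcomm : d * (d * Φ (n + 1) - Φ (n + 1) * d)
              + (d * Φ (n + 1) - Φ (n + 1) * d) * d
              = d * d * Φ (n + 1) - Φ (n + 1) * (d * d) := by noncomm_ring
          have hwy : w = (d * Φ (n + 1) - Φ (n + 1) * d) - y := by rw [hyval]; abel
          rw [hwy]
          calc d * ((d * Φ (n + 1) - Φ (n + 1) * d) - y)
              + ((d * Φ (n + 1) - Φ (n + 1) * d) - y) * d
              = (d * (d * Φ (n + 1) - Φ (n + 1) * d)
                  + (d * Φ (n + 1) - Φ (n + 1) * d) * d) - (d * y + y * d) := by noncomm_ring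
            _ = (d * d * Φ (n + 1) - Φ (n + 1) * (d * d)) - (d * y + y * d) := by rw [hcomm]
            _ = 0 := by rw [hd, hycoc]; simp
        have hGw := hG w hwcoc
        rw [← hΦsucc] at hGw
        rw [hy] at hyval ⊢
        rw [hyval, hGw]
        simp
  have hmk : ED * EΦ = EΦ * T := by
    have hY0 : Y = 0 := PowerSeries.ext fun n => by rw [key n]; simp
    rw [hY] at hY0
    exact sub_eq_zero.mp hY0
  refine ⟨Φ, hΦ0, ?_, ?_⟩
  · -- bijectivity
    set ΨR : ℕ → Module.End k V := invR Φ with hΨR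
    set ΨL : ℕ → Module.End k V := invL Φ with hΨL
    have hR : EΦ * PowerSeries.mk ΨR = 1 := mk_invR Φ hΦ0
    have hL : PowerSeries.mk ΨL * EΦ = 1 := mk_invL Φ hΦ0
    have hLR : PowerSeries.mk ΨL = PowerSeries.mk ΨR := by
      calc PowerSeries.mk ΨL = PowerSeries.mk ΨL * (EΦ * PowerSeries.mk ΨR) := by
            rw [hR, mul_one]
        _ = (PowerSeries.mk ΨL * EΦ) * PowerSeries.mk ΨR := by rw [mul_assoc]
        _ = PowerSeries.mk ΨR := by rw [hL, one_mul]
    have hcoeff1 : (fun n => PowerSeries.coeff n (1 : PowerSeries (Module.End k V)))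
        = (fun n => if n = 0 then (1 : Module.End k V) else 0) := by
      funext n; rw [PowerSeries.coeff_one]
    have h1 : ext Φ * ext ΨR = 1 := by
      rw [ext_mul, ← hEΦ, hR, hcoeff1, ext_delta]
    have h2 : ext ΨR * ext Φ = 1 := by
      rw [ext_mul, ← hEΦ, ← hLR, hL, hcoeff1, ext_delta]
    refine Function.bijective_iff_has_inverse.mpr ⟨ext ΨR, ?_, ?_⟩
    · intro v
      have := congrArg (fun f : Module.End k (ℕ → V) => f v) h2
      simpa [Module.End.mul_apply] using this
    · intro v
      have := congrArg (fun f : Module.End k (ℕ → V) => f v) h1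
      simpa [Module.End.mul_apply] using this
  · -- intertwining
    rw [ext_mul, ext_mul]
    congr 1
    funext n
    rw [mk_trivDef, ← hED, ← hEΦ, ← hT, hmk]
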